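/- Let q, t, c ∈ ℂ with |q| < 1, |t| < 1 and |cq| < 1. Then ∑_{n=0}^∞ c^n · [ (t;q)_n − (t;q)_∞ ] = (t;q)_∞ · ∑_{n=1}^∞ t^n / ( (q;q)_n · (1 − cq^n) ). -/

import Mathlib

/-- Finite q-Pochhammer symbol `(x;q)_n = ∏_{k=0}^{n-1} (1 - x q^k)`. -/
noncomputable def qPoch (x q : ℂ) (n : ℕ) : ℂ := ∏ k ∈ Finset.range n, (1 - x * q ^ k)

/-- Infinite q-Pochhammer symbol `(x;q)_∞ = ∏_{k=0}^{∞} (1 - x q^k)`. -/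
noncomputable def qPochInf (x q : ℂ) : ℂ := ∏' k : ℕ, (1 - x * q ^ k)

/-- Gaussian binomial coefficient `[n k]_q`, equal to `0` for `k > n`. -/
noncomputable def gbinom (q : ℂ) (n k : ℕ) : ℂ :=
  if k ≤ n then qPoch q q n / (qPoch q q k * qPoch q q (n - k)) else 0

/-!
The q-exponential `e_q(z) = ∑ z^m / (q;q)_m` satisfies `(1 - z) e_q(z) = e_q(zq)`; iterating,
`(z;q)_N e_q(z) = e_q(zq^N) → 1`, which is Euler's identity `(z;q)_∞ e_q(z) = 1`. Applied to
`(t;q)_n = (t;q)_∞ · e_q(tq^n)` it gives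
`(t;q)_n - (t;q)_∞ = (t;q)_∞ ∑_{m ≥ 1} (tq^n)^m / (q;q)_m`.
Multiplying by `c^n` and summing over `n`, the double series converges absolutely since
`|cq^m| ≤ |cq| < 1`, so the sums may be swapped; the inner sum over `n` is then geometric with
ratio `cq^m`.
-/

open Filter Topology

theorem tsum_tsum_pow_mul_eq {K : Type*} [NormedDivisionRing K] [CompleteSpace K]
    {r b : ℕ → K} {ρ : ℝ} (hρ : ρ < 1) (hr : ∀ m, ‖r m‖ ≤ ρ) (hb : Summable fun m ↦ ‖b m‖) :
    ∑' n, ∑' m, r m ^ n * b m = ∑' m, (1 - r m)⁻¹ * b m := by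
  have hρ₀ : 0 ≤ ρ := (norm_nonneg _).trans (hr 0)
  have hsum : Summable (Function.uncurry fun n m ↦ r m ^ n * b m) := by
    refine .of_norm_bounded
      ((summable_geometric_of_lt_one hρ₀ hρ).mul_of_nonneg hb (fun n ↦ by positivity)
        fun m ↦ norm_nonneg _) fun ⟨n, m⟩ ↦ ?_
    rw [Function.uncurry_apply_pair, norm_mul, norm_pow]
    gcongr
    exact hr m
  rw [← hsum.tsum_comm]
  exact tsum_congr fun m ↦ by
    rw [tsum_mul_right, tsum_geometric_of_norm_lt_one ((hr m).trans_lt hρ)]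

section QPochhammer

variable {x q : ℂ}

theorem qPoch_succ (x q : ℂ) (n : ℕ) : qPoch x q (n + 1) = qPoch x q n * (1 - x * q ^ n) :=
  Finset.prod_range_succ _ n

theorem norm_mul_pow_le (hq : ‖q‖ ≤ 1) (x : ℂ) (k : ℕ) : ‖x * q ^ k‖ ≤ ‖x‖ := by
  rw [norm_mul, norm_pow]
  exact mul_le_of_le_one_right (norm_nonneg x) (pow_le_one₀ (norm_nonneg q) hq)

theorem one_sub_mul_pow_ne_zero (hq : ‖q‖ ≤ 1) (hx : ‖x‖ < 1) (k : ℕ) :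
    1 - x * q ^ k ≠ 0 := by
  refine sub_ne_zero.2 fun h ↦ ?_
  simpa [← h] using (norm_mul_pow_le hq x k).trans_lt hx

theorem qPoch_ne_zero (hq : ‖q‖ ≤ 1) (hx : ‖x‖ < 1) (n : ℕ) : qPoch x q n ≠ 0 :=
  Finset.prod_ne_zero_iff.2 fun k _ ↦ one_sub_mul_pow_ne_zero hq hx k

theorem multipliable_one_sub_mul_pow (x : ℂ) (hq : ‖q‖ < 1) :
    Multipliable fun k : ℕ ↦ 1 - x * q ^ k := by
  simpa [sub_eq_add_neg] using Complex.multipliable_one_add_of_summable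
    ((summable_geometric_of_norm_lt_one hq).mul_left x).neg

theorem tendsto_qPoch_qPochInf (x : ℂ) (hq : ‖q‖ < 1) :
    Tendsto (qPoch x q) atTop (𝓝 (qPochInf x q)) := by
  unfold qPoch qPochInf
  exact (multipliable_one_sub_mul_pow x hq).hasProd.tendsto_prod_nat

theorem qPochInf_eq_qPoch_mul (x : ℂ) (hq : ‖q‖ < 1) (n : ℕ) :
    qPochInf x q = qPoch x q n * qPochInf (x * q ^ n) q := by
  have hshift : Multipliable fun k ↦ 1 - x * q ^ (k + n) :=
    (multipliable_one_sub_mul_pow (x * q ^ n) hq).congr fun k ↦ by ring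
  rw [qPochInf, qPochInf, qPoch,
    ← hshift.prod_mul_tprod_nat_mul' (f := fun k ↦ 1 - x * q ^ k)]
  exact congrArg _ (tprod_congr fun k ↦ by ring)

noncomputable def qExp (q z : ℂ) : ℂ := ∑' m : ℕ, z ^ m / qPoch q q m

variable {z : ℂ}

theorem qExp_term_succ (hq : ‖q‖ < 1) (m : ℕ) :
    z ^ (m + 1) / qPoch q q (m + 1) = z / (1 - q * q ^ m) * (z ^ m / qPoch q q m) := by
  have := one_sub_mul_pow_ne_zero hq.le hq m
  have := qPoch_ne_zero hq.le hq m
  rw [qPoch_succ]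
  field_simp
  ring

theorem summable_norm_qExp_term (hq : ‖q‖ < 1) (hz : ‖z‖ < 1) :
    Summable fun m : ℕ ↦ ‖z ^ m / qPoch q q m‖ := by
  have hratio : Tendsto (fun m : ℕ ↦ ‖z‖ / ‖1 - q * q ^ m‖) atTop (𝓝 ‖z‖) := by
    have := ((tendsto_pow_atTop_nhds_zero_of_norm_lt_one hq).const_mul q).const_sub 1
    simpa [Pi.div_def] using tendsto_const_nhds.div this.norm (by simp)
  refine summable_of_ratio_norm_eventually_le (r := (1 + ‖z‖) / 2) (by linarith) ?_
  filter_upwards [hratio.eventually_le_const (by linarith : ‖z‖ < (1 + ‖z‖) / 2)] with m hm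
  rw [norm_norm, norm_norm, qExp_term_succ hq, norm_mul, norm_div]
  gcongr

theorem summable_qExp_term (hq : ‖q‖ < 1) (hz : ‖z‖ < 1) :
    Summable fun m : ℕ ↦ z ^ m / qPoch q q m :=
  (summable_norm_qExp_term hq hz).of_norm

theorem one_sub_mul_qExp (hq : ‖q‖ < 1) (hz : ‖z‖ < 1) :
    (1 - z) * qExp q z = qExp q (z * q) := by
  have hzq : ‖z * q‖ < 1 := by simpa using (norm_mul_pow_le hq.le z 1).trans_lt hz
  have hsub := (summable_qExp_term hq hz).sub (summable_qExp_term hq hzq)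
  have hdiff : qExp q z - qExp q (z * q) = z * qExp q z := by
    rw [qExp, qExp, ← (summable_qExp_term hq hz).tsum_sub (summable_qExp_term hq hzq),
      hsub.tsum_eq_zero_add, ← tsum_mul_left]
    simp only [pow_zero, sub_self, zero_add]
    refine tsum_congr fun m ↦ ?_
    have := one_sub_mul_pow_ne_zero hq.le hq m
    have := qPoch_ne_zero hq.le hq m
    rw [qPoch_succ]
    field_simp
    ring
  linear_combination hdiff

theorem qPoch_mul_qExp (hq : ‖q‖ < 1) (hz : ‖z‖ < 1) (N : ℕ) :
    qPoch z q N * qExp q z = qExp q (z * q ^ N) := by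
  induction N with
  | zero => simp [qPoch]
  | succ N ih =>
    rw [pow_succ, ← mul_assoc, ← one_sub_mul_qExp hq ((norm_mul_pow_le hq.le z N).trans_lt hz),
      ← ih, qPoch_succ]
    ring

theorem tendsto_qExp_mul_pow (hq : ‖q‖ < 1) (hz : ‖z‖ < 1) :
    Tendsto (fun N : ℕ ↦ qExp q (z * q ^ N)) atTop (𝓝 1) := by
  have hlim := tendsto_tsum_of_dominated_convergence (summable_norm_qExp_term hq hz)
    (f := fun N m ↦ (z * q ^ N) ^ m / qPoch q q m) (g := fun m ↦ (0 : ℂ) ^ m / qPoch q q m)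
    (fun m ↦ by
      simpa using (((tendsto_pow_atTop_nhds_zero_of_norm_lt_one hq).const_mul z).pow m).div_const
        (qPoch q q m))
    (.of_forall fun N m ↦ by
      rw [norm_div, norm_div, norm_pow, norm_pow]
      gcongr
      exact norm_mul_pow_le hq.le z N)
  rwa [tsum_eq_single 0 fun m hm ↦ by simp [zero_pow hm], pow_zero, qPoch,
    Finset.prod_range_zero, div_one] at hlim

theorem qPochInf_mul_qExp (hq : ‖q‖ < 1) (hz : ‖z‖ < 1) : qPochInf z q * qExp q z = 1 :=
  tendsto_nhds_unique ((tendsto_qPoch_qPochInf z hq).mul_const _ |>.congr (qPoch_mul_qExp hq hz))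
    (tendsto_qExp_mul_pow hq hz)

end QPochhammer

theorem qPoch_sub_qPochInf {q t : ℂ} (hq : ‖q‖ < 1) (ht : ‖t‖ < 1) (n : ℕ) :
    qPoch t q n - qPochInf t q
      = qPochInf t q * ∑' m : ℕ, (t * q ^ n) ^ (m + 1) / qPoch q q (m + 1) := by
  have htq := (norm_mul_pow_le hq.le t n).trans_lt ht
  have heuler : qPoch t q n = qPochInf t q * qExp q (t * q ^ n) := by
    rw [qPochInf_eq_qPoch_mul t hq n, mul_assoc, qPochInf_mul_qExp hq htq, mul_one]
  rw [heuler, qExp, (summable_qExp_term hq htq).tsum_eq_zero_add, pow_zero, qPoch,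
    Finset.prod_range_zero, div_one]
  ring

theorem stmt12 (q t c : ℂ) (hq : ‖q‖ < 1) (ht : ‖t‖ < 1)
    (hcq : ‖c * q‖ < 1) :
    ∑' n : ℕ, c ^ n * (qPoch t q n - qPochInf t q)
      = qPochInf t q * ∑' n : ℕ, t ^ (n + 1) /
          (qPoch q q (n + 1) * (1 - c * q ^ (n + 1))) := by
  have hterm (n : ℕ) : c ^ n * (qPoch t q n - qPochInf t q)
      = qPochInf t q * ∑' m : ℕ, (c * q ^ (m + 1)) ^ n * (t ^ (m + 1) / qPoch q q (m + 1)) := by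
    rw [qPoch_sub_qPochInf hq ht n, mul_left_comm, ← tsum_mul_left]
    exact congrArg _ (tsum_congr fun m ↦ by ring)
  have hratio (m : ℕ) : ‖c * q ^ (m + 1)‖ ≤ ‖c * q‖ := by
    rw [pow_succ', ← mul_assoc]
    exact norm_mul_pow_le hq.le _ m
  have hsummable := (summable_nat_add_iff 1).2 (summable_norm_qExp_term hq ht)
  rw [tsum_congr hterm, tsum_mul_left, tsum_tsum_pow_mul_eq hcq hratio hsummable]
  exact congrArg _ (tsum_congr fun m ↦ by rw [div_mul_eq_div_div, div_eq_inv_mul (_ / _)])
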